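/- If z₁ and z₂ are complex numbers with |z₁| < 1 and |z₂| < 1, then (s, p) = (z₁ + z₂, z₁z₂) satisfies |s − conj(s)·p| < 1 − |p|². -/

import Mathlib

/-!
Writing `s = z₁ + z₂` and `p = z₁ z₂`, one has `s - s̄ p = z₁ (1 - |z₂|²) + z₂ (1 - |z₁|²)`,
so with `a = |z₁|`, `b = |z₂|` the triangle inequality bounds the left side by
`a (1 - b²) + b (1 - a²)`, and `1 - a²b²` exceeds this by `(1 - a)(1 - b)(1 - ab) > 0`.
-/

section RCLike

variable {𝕜 : Type*} [RCLike 𝕜]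

theorem add_sub_conj_add_mul_mul_eq (z₁ z₂ : 𝕜) :
    (z₁ + z₂) - starRingEnd 𝕜 (z₁ + z₂) * (z₁ * z₂) =
      z₁ * (1 - starRingEnd 𝕜 z₂ * z₂) + z₂ * (1 - starRingEnd 𝕜 z₁ * z₁) := by
  rw [map_add]
  ring

theorem norm_one_sub_conj_mul_self {w : 𝕜} (hw : ‖w‖ ≤ 1) :
    ‖1 - starRingEnd 𝕜 w * w‖ = 1 - ‖w‖ ^ 2 := by
  have hw2 : 0 ≤ 1 - ‖w‖ ^ 2 := by nlinarith [norm_nonneg w]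
  rw [RCLike.conj_mul, ← RCLike.ofReal_pow, ← RCLike.ofReal_one, ← RCLike.ofReal_sub,
    RCLike.norm_ofReal, abs_of_nonneg hw2]

theorem norm_add_sub_conj_add_mul_mul_le {z₁ z₂ : 𝕜} (h₁ : ‖z₁‖ ≤ 1) (h₂ : ‖z₂‖ ≤ 1) :
    ‖(z₁ + z₂) - starRingEnd 𝕜 (z₁ + z₂) * (z₁ * z₂)‖ ≤
      ‖z₁‖ * (1 - ‖z₂‖ ^ 2) + ‖z₂‖ * (1 - ‖z₁‖ ^ 2) := by
  rw [add_sub_conj_add_mul_mul_eq, ← norm_one_sub_conj_mul_self h₁,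
    ← norm_one_sub_conj_mul_self h₂, ← norm_mul, ← norm_mul]
  exact norm_add_le _ _

end RCLike

theorem mul_one_sub_sq_add_mul_one_sub_sq_lt {a b : ℝ} (ha₀ : 0 ≤ a) (ha : a < 1) (hb : b < 1) :
    a * (1 - b ^ 2) + b * (1 - a ^ 2) < 1 - (a * b) ^ 2 := by
  have hab : a * b < 1 := by nlinarith
  have hgap : 1 - (a * b) ^ 2 - (a * (1 - b ^ 2) + b * (1 - a ^ 2)) =
      (1 - a) * (1 - b) * (1 - a * b) := by ring
  linarith [mul_pos (mul_pos (sub_pos.2 ha) (sub_pos.2 hb)) (sub_pos.2 hab)]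

/-- Open Agler–Young inequality for the open symmetrized bidisc. -/
theorem stmt4 (z₁ z₂ : ℂ) (h₁ : ‖z₁‖ < 1) (h₂ : ‖z₂‖ < 1) :
    ‖(z₁ + z₂) - (starRingEnd ℂ) (z₁ + z₂) * (z₁ * z₂)‖ <
      1 - ‖z₁ * z₂‖ ^ 2 := by
  rw [norm_mul]
  exact (norm_add_sub_conj_add_mul_mul_le h₁.le h₂.le).trans_lt
    (mul_one_sub_sq_add_mul_one_sub_sq_lt (norm_nonneg _) h₁ h₂)
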